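/- arXiv:2602.17577 — 8 statements merged into one kernel-verified Lean document; each statement's English description precedes it below -/
import Mathlib

section
/- There exists a simultaneous Blackwell approachability instance with m = 2 one-dimensional target sets, where each set is individually approachable, but for every ε < 1/2 no mixture linear optimization oracle exists: concretely, with A = Δ^2, U^(1) = U^(2) = {1}, V^(1) = V^(2) = (−∞, 0], v^(1)(a,b) = a_1, v^(2)(a,b) = a_2, the mixture weight w = (1/2, 1/2) yields the inequality 1/2 = Σ_{i∈[2]} (1/2)·a_i ≤ ε, which is false for every a ∈ Δ^2 when ε < 1/2. -/
/-- with `A = Δ²`, `v⁽¹⁾(a,b) = a₀`, `v⁽²⁾(a,b) = a₁`, `U⁽¹⁾ = U⁽²⁾ = {1}`, `ρ = 0`: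
each target set `(-∞, 0]` is individually (response-)satisfiable, but for the mixture weight
`w = (1/2, 1/2)` no `a ∈ Δ²` achieves `∑ᵢ (1/2)·aᵢ ≤ ε` when `ε < 1/2`, so no ε-MLOO exists. -/
theorem stmt_3 :
    (∃ a ∈ stdSimplex ℝ (Fin 2), a 0 ≤ 0) ∧
    (∃ a ∈ stdSimplex ℝ (Fin 2), a 1 ≤ 0) ∧
    (∀ ε : ℝ, ε < 1 / 2 → ∀ a ∈ stdSimplex ℝ (Fin 2),
      ¬ (∑ i, (1 / 2 : ℝ) * a i ≤ ε)) := by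
  refine ⟨⟨![0, 1], ⟨?_, ?_⟩, by norm_num⟩, ⟨![1, 0], ⟨?_, ?_⟩, by norm_num⟩, ?_⟩
  · intro i; fin_cases i <;> norm_num
  · simp [Fin.sum_univ_two]
  · intro i; fin_cases i <;> norm_num
  · simp [Fin.sum_univ_two]
  · intro ε hε a ⟨_, hsum⟩
    rw [← Finset.mul_sum, hsum]
    norm_num
    linarith
end

section
/- For each s ∈ [0,1], the loss ℓ_s(p,y) := −|p − s| + (p − y)·sign(p − s) on [0,1] × {0,1} is a proper loss; that is, for every q ∈ [0,1], the map p ↦ E_{y∼Bernoulli(q)}[ℓ_s(p,y)] is minimized at p = q. -/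
/-- `sign` with the convention `sign 0 = 1`. -/
noncomputable def sgn (x : ℝ) : ℝ := if 0 ≤ x then 1 else -1

/-- The threshold loss `ℓ_s(p, y) = -|p - s| + (p - y)·sign(p - s)`. -/
noncomputable def thresholdLoss (s p y : ℝ) : ℝ := -|p - s| + (p - y) * sgn (p - s)

/-- each `ℓ_s` is a proper loss: for every `q ∈ [0,1]`,
`p ↦ E_{y ~ Bernoulli(q)}[ℓ_s(p, y)]` is minimized at `p = q`. -/
theorem stmt_5 (s : ℝ) (hs : s ∈ Set.Icc (0 : ℝ) 1) (q : ℝ) (hq : q ∈ Set.Icc (0 : ℝ) 1)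
    (p : ℝ) (hp : p ∈ Set.Icc (0 : ℝ) 1) :
    q * thresholdLoss s q 1 + (1 - q) * thresholdLoss s q 0
      ≤ q * thresholdLoss s p 1 + (1 - q) * thresholdLoss s p 0 := by
  simp only [thresholdLoss, sgn]
  rcases le_or_gt s q with h1 | h1 <;> rcases le_or_gt s p with h2 | h2 <;>
    simp [sub_nonneg, h1, h2, not_le.mpr, abs_of_nonneg, abs_of_neg, sub_neg.mpr] <;>
    nlinarith
end

section
/- (Correctness of binary CMLOO, Case 3.) Let h : [0,1] → [−1,1] and suppose p ≤ p' ≤ p + ε with h(p) ≤ 0 and h(p') ≥ 0. Define the mixed strategy that plays p with probability |h(p')|/(|h(p)|+|h(p')|) and p' with probability |h(p)|/(|h(p)|+|h(p')|) (assume |h(p)|+|h(p')| > 0). Then for every b ∈ [0,1], the expected value of h(x)(x − b) under this mixture equals (|h(p)|/(|h(p)|+|h(p')|))·h(p')·(p' − p), which is at most ε. -/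
/-- binary CMLOO, Case 3: mixing `p` and `p'` with weights proportional to
`|h(p')|` and `|h(p)|` makes the payoff independent of `b` and at most `ε`. -/
theorem stmt_8 (h : ℝ → ℝ) (hbd : ∀ x ∈ Set.Icc (0 : ℝ) 1, |h x| ≤ 1)
    (ε p p' : ℝ) (hp : p ∈ Set.Icc (0 : ℝ) 1) (hp' : p' ∈ Set.Icc (0 : ℝ) 1)
    (hle : p ≤ p') (hgap : p' ≤ p + ε) (hhp : h p ≤ 0) (hhp' : 0 ≤ h p')
    (hpos : 0 < |h p| + |h p'|) :
    ∀ b ∈ Set.Icc (0 : ℝ) 1,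
      (|h p'| / (|h p| + |h p'|)) * (h p * (p - b))
          + (|h p| / (|h p| + |h p'|)) * (h p' * (p' - b))
        = (|h p| / (|h p| + |h p'|)) * h p' * (p' - p) ∧
      (|h p| / (|h p| + |h p'|)) * h p' * (p' - p) ≤ ε := by
  intro b hb
  have ha : |h p| = -h p := abs_of_nonpos hhp
  have hc : |h p'| = h p' := abs_of_nonneg hhp'
  have hne : |h p| + |h p'| ≠ 0 := ne_of_gt hpos
  constructor
  · rw [ha, hc]
    field_simp
    ring
  · have h1 : |h p| / (|h p| + |h p'|) ≤ 1 := by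
      apply div_le_one_of_le₀ _ hpos.le
      nlinarith [abs_nonneg (h p')]
    have h2 : h p' ≤ 1 := by
      have := hbd p' hp'
      rw [hc] at this; exact this
    have h3 : p' - p ≤ ε := by linarith
    have h4 : 0 ≤ |h p| / (|h p| + |h p'|) := by positivity
    have h5 : 0 ≤ p' - p := by linarith
    nlinarith [mul_nonneg h4 hhp', mul_le_one₀ h1 hhp' h2]
end

section
/- (Minimax step for multiclass MLOO.) Let N be a finite ε-net of Δ^k in ℓ_1 distance, and let f : N → ℝ^k be any assignment with ‖f(s)‖_∞ ≤ R for all s ∈ N. Then min over distributions a ∈ Δ^N of max over q ∈ Δ^k of E_{s∼a}⟨f(s), s − q⟩ is at most εR. In particular there exists a ∈ Δ^N with E_{s∼a}⟨f(s), s − y⟩ ≤ εR for all y ∈ ∂Δ^k. -/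
/-!
Von Neumann's minimax theorem for the matrix game whose payoff for the pure strategy `s ∈ N`
against the vertex `e_j` is `⟨f(s), s - e_j⟩` gives a saddle point `(a, b)`. Against any `q`
the mixed strategy `a` loses at most what the best pure reply to `b` loses, and by the net
property some `s ∈ N` is `ε`-close to `b`, so Hölder bounds that loss by `εR`.
-/

open Matrix

theorem exists_isSaddlePointOn_stdSimplex_dotProduct_mulVec {ι κ : Type*} [Fintype ι] [Fintype κ]
    [Nonempty ι] [Nonempty κ] (M : Matrix ι κ ℝ) :
    ∃ a ∈ stdSimplex ℝ ι, ∃ b ∈ stdSimplex ℝ κ,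
      IsSaddlePointOn (stdSimplex ℝ ι) (stdSimplex ℝ κ) (fun a b ↦ a ⬝ᵥ M *ᵥ b) a b := by
  classical
  have hι : (stdSimplex ℝ ι).Nonempty := ⟨_, single_mem_stdSimplex ℝ (Classical.arbitrary ι)⟩
  have hκ : (stdSimplex ℝ κ).Nonempty := ⟨_, single_mem_stdSimplex ℝ (Classical.arbitrary κ)⟩
  refine Sion.exists_isSaddlePointOn hι (convex_stdSimplex ℝ ι) (isCompact_stdSimplex ℝ ι)
    (fun b _ ↦ ?_) (fun b _ ↦ ?_) (convex_stdSimplex ℝ κ) hκ (isCompact_stdSimplex ℝ κ)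
    (fun a _ ↦ ?_) (fun a _ ↦ ?_)
  · exact (continuous_id.dotProduct continuous_const).lowerSemicontinuous.lowerSemicontinuousOn _
  · exact (((dotProductBilin ℝ ℝ).flip (M *ᵥ b)).convexOn (convex_stdSimplex ℝ ι)).quasiconvexOn
  · exact (continuous_const.dotProduct (continuous_const.matrix_mulVec continuous_id))
      |>.upperSemicontinuous.upperSemicontinuousOn _
  · simp_rw [dotProduct_mulVec]
    exact ((dotProductBilin ℝ ℝ (a ᵥ* M)).concaveOn (convex_stdSimplex ℝ κ)).quasiconcaveOn

theorem sum_mul_le_mul_sum_abs {ι : Type*} [Fintype ι] {u v : ι → ℝ} {R : ℝ}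
    (hu : ∀ i, |u i| ≤ R) : ∑ i, u i * v i ≤ R * ∑ i, |v i| := by
  rw [Finset.mul_sum]
  refine Finset.sum_le_sum fun i _ ↦ ?_
  calc u i * v i ≤ |u i| * |v i| := abs_mul (u i) (v i) ▸ le_abs_self _
    _ ≤ R * |v i| := mul_le_mul_of_nonneg_right (hu i) (abs_nonneg _)

theorem sum_mul_sub_eq_sum_mul_of_sum_eq_one {ι : Type*} [Fintype ι] (g s q : ι → ℝ)
    (hq : ∑ i, q i = 1) :
    ∑ i, g i * (s i - q i) = ∑ j, (∑ i, g i * s i - g j) * q j := by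
  simp only [mul_sub, Finset.sum_sub_distrib, ← Finset.sum_mul, hq, one_mul, mul_comm]

theorem Finset.sum_dite_mem_mul {α : Type*} [DecidableEq α] (N : Finset α) (a : N → ℝ)
    (g : α → ℝ) :
    ∑ s ∈ N, (if h : s ∈ N then a ⟨s, h⟩ else 0) * g s = ∑ s : N, a s * g s := by
  rw [← Finset.sum_attach, Finset.univ_eq_attach]
  exact Finset.sum_congr rfl fun s _ ↦ by simp

theorem stmt_10_general (k : ℕ) (hk : 0 < k) (ε R : ℝ) (hR : 0 ≤ R)
    (N : Finset (Fin k → ℝ))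
    (hnet : ∀ q ∈ stdSimplex ℝ (Fin k), ∃ s ∈ N, ∑ i, |s i - q i| ≤ ε)
    (f : (Fin k → ℝ) → (Fin k → ℝ)) (hf : ∀ s ∈ N, ∀ i, |f s i| ≤ R) :
    ∃ a : (Fin k → ℝ) → ℝ, (∀ s, 0 ≤ a s) ∧ (∑ s ∈ N, a s = 1) ∧
      ∀ q ∈ stdSimplex ℝ (Fin k),
        ∑ s ∈ N, a s * (∑ i, f s i * (s i - q i)) ≤ ε * R := by
  have : Nonempty (Fin k) := ⟨⟨0, hk⟩⟩
  have : Nonempty N := by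
    obtain ⟨s, hs, -⟩ := hnet _ (single_mem_stdSimplex ℝ (⟨0, hk⟩ : Fin k))
    exact ⟨⟨s, hs⟩⟩
  obtain ⟨a, ha, b, hb, hsaddle⟩ := exists_isSaddlePointOn_stdSimplex_dotProduct_mulVec
    (fun (s : N) j ↦ ∑ i, f s i * s.1 i - f s j)
  have payoff_eq : ∀ (c : N → ℝ), ∀ q ∈ stdSimplex ℝ (Fin k),
      ∑ s : N, c s * ∑ i, f s i * (s.1 i - q i) =
        c ⬝ᵥ (fun (s : N) j ↦ ∑ i, f s i * s.1 i - f s j) *ᵥ q := fun c q hq ↦ by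
    simp only [dotProduct, mulVec, sum_mul_sub_eq_sum_mul_of_sum_eq_one _ _ _ hq.2]
  refine ⟨fun s ↦ if h : s ∈ N then a ⟨s, h⟩ else 0, fun s ↦ ?_, ?_, fun q hq ↦ ?_⟩
  · exact dite_nonneg (fun _ ↦ ha.1 _) fun _ ↦ le_rfl
  · simpa using (Finset.sum_dite_mem_mul N a 1).trans (by simpa using ha.2)
  obtain ⟨s, hs, hsb⟩ := hnet b hb
  calc _ = a ⬝ᵥ _ *ᵥ q := (Finset.sum_dite_mem_mul N a _).trans (payoff_eq a q hq)
    _ ≤ Pi.single ⟨s, hs⟩ 1 ⬝ᵥ _ *ᵥ b := hsaddle _ (single_mem_stdSimplex ℝ _) q hq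
    _ = ∑ i, f s i * (s i - b i) := by
      rw [← payoff_eq _ b hb, Fintype.sum_eq_single ⟨s, hs⟩ fun t ht ↦ by simp [ht]]
      simp
    _ ≤ R * ε := (sum_mul_le_mul_sum_abs (hf s hs)).trans (mul_le_mul_of_nonneg_left hsb hR)
    _ = ε * R := mul_comm R ε

/-- minimax step for the multiclass MLOO: if `N` is a finite ε-net of `Δ^k`
in ℓ₁ and `‖f(s)‖_∞ ≤ R` for `s ∈ N`, then there is a distribution `a ∈ Δ^N` with
`E_{s∼a}⟨f(s), s - q⟩ ≤ εR` for every `q ∈ Δ^k` (in particular for all vertices `q = e_i`). -/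
theorem stmt_10 (k : ℕ) (hk : 0 < k) (ε R : ℝ) (hε : 0 ≤ ε) (hR : 0 ≤ R)
    (N : Finset (Fin k → ℝ)) (hNsub : ↑N ⊆ stdSimplex ℝ (Fin k))
    (hnet : ∀ q ∈ stdSimplex ℝ (Fin k), ∃ s ∈ N, ∑ i, |s i - q i| ≤ ε)
    (f : (Fin k → ℝ) → (Fin k → ℝ)) (hf : ∀ s ∈ N, ∀ i, |f s i| ≤ R) :
    ∃ a : (Fin k → ℝ) → ℝ, (∀ s, 0 ≤ a s) ∧ (∑ s ∈ N, a s = 1) ∧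
      ∀ q ∈ stdSimplex ℝ (Fin k),
        ∑ s ∈ N, a s * (∑ i, f s i * (s i - q i)) ≤ ε * R :=
  stmt_10_general k hk ε R hR N hnet f hf
end

section
/- (Omniprediction decomposition, online setting.) Fix losses ℓ : Ω × ∂Δ^k → ℝ for ℓ ∈ L and comparators c : ℝ^d → Ω in C, and suppose predictions p_1,…,p_T ∈ Δ^k satisfy (i) ε_1-multiaccuracy: (1/T)Σ_t ⟨p_t − y_t, d_ℓ(c(x_t))⟩ ≤ ε_1 for all ℓ ∈ L, c ∈ C, and (ii) ε_2-calibration: (1/T)Σ_t ⟨p_t − y_t, −d_ℓ(k*_ℓ(p_t))⟩ ≤ ε_2 for all ℓ ∈ L. Then (1/T)Σ_t ℓ(k*_ℓ(p_t), y_t) ≤ (1/T)Σ_t ℓ(c(x_t), y_t) + ε_1 + ε_2 for all ℓ ∈ L, c ∈ C. -/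
/-!
Each round splits the regret against a comparator into a multiaccuracy term and a calibration
term. Writing `e_y` for the one-hot label, `⟨p - e_y, f⟩ = 𝔼_p f - f y`, so
`ℓ(k*(p), y) - ℓ(c, y)` equals `𝔼_p ℓ(k*(p), ·) - 𝔼_p ℓ(c, ·)` plus
`⟨p - e_y, d_ℓ(c)⟩ + ⟨p - e_y, -d_ℓ(k*(p))⟩`, and the first difference is nonpositive by
optimality of `k*(p)` against `p`. Averaging over the rounds bounds the last two terms by `ε₁`
and `ε₂`.
-/

open Finset

section

variable {ι R : Type*} [Fintype ι] [DecidableEq ι]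

theorem sum_sub_ite_mul_eq [CommRing R] (p f : ι → R) (y : ι) :
    ∑ i, (p i - if y = i then 1 else 0) * f i = ∑ i, p i * f i - f y := by
  simp only [sub_mul, sum_sub_distrib, ite_mul, one_mul, zero_mul, sum_ite_eq, mem_univ,
    if_true]

theorem apply_le_of_sum_mul_le [CommRing R] [PartialOrder R] [IsOrderedRing R]
    {p f g : ι → R} (hopt : ∑ i, p i * g i ≤ ∑ i, p i * f i) (y : ι) :
    g y ≤ f y + ∑ i, (p i - if y = i then 1 else 0) * f i
      + ∑ i, (p i - if y = i then 1 else 0) * -g i := by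
  rw [sum_sub_ite_mul_eq, sum_sub_ite_mul_eq]
  simp only [mul_neg, sum_neg_distrib]
  calc g y ≤ g y + (∑ i, p i * f i - ∑ i, p i * g i) :=
        le_add_of_nonneg_right (sub_nonneg.2 hopt)
    _ = _ := by ring

end

theorem mul_sum_le_of_le_add_add {τ R : Type*} [Fintype τ] [Semiring R] [PartialOrder R]
    [IsOrderedRing R] {c ε₁ ε₂ : R} (hc : 0 ≤ c) {a b u v : τ → R}
    (h : ∀ t, a t ≤ b t + u t + v t) (hu : c * ∑ t, u t ≤ ε₁)
    (hv : c * ∑ t, v t ≤ ε₂) :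
    c * ∑ t, a t ≤ c * ∑ t, b t + ε₁ + ε₂ := by
  calc c * ∑ t, a t ≤ c * ∑ t, (b t + u t + v t) := by
        gcongr with t
        exact h t
    _ = c * ∑ t, b t + c * ∑ t, u t + c * ∑ t, v t := by
      simp only [sum_add_distrib, mul_add]
    _ ≤ c * ∑ t, b t + ε₁ + ε₂ := by gcongr

theorem stmt_13_general {X Ω : Type*} (k T : ℕ)
    (L : Set (Ω → Fin k → ℝ)) (C : Set (X → Ω))
    (kstar : (Ω → Fin k → ℝ) → (Fin k → ℝ) → Ω)
    (x : Fin T → X) (y : Fin T → Fin k) (p : Fin T → Fin k → ℝ)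
    (hp : ∀ t, p t ∈ stdSimplex ℝ (Fin k))
    (hks : ∀ ℓ ∈ L, ∀ pp ∈ stdSimplex ℝ (Fin k), ∀ w : Ω,
      ∑ i, pp i * ℓ (kstar ℓ pp) i ≤ ∑ i, pp i * ℓ w i)
    (ε1 ε2 : ℝ)
    (hMA : ∀ ℓ ∈ L, ∀ c ∈ C,
      (1 / T : ℝ) * ∑ t, ∑ i, (p t i - if y t = i then 1 else 0) * ℓ (c (x t)) i ≤ ε1)
    (hCal : ∀ ℓ ∈ L,
      (1 / T : ℝ) * ∑ t, ∑ i,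
        (p t i - if y t = i then 1 else 0) * (-(ℓ (kstar ℓ (p t)) i)) ≤ ε2) :
    ∀ ℓ ∈ L, ∀ c ∈ C,
      (1 / T : ℝ) * ∑ t, ℓ (kstar ℓ (p t)) (y t)
        ≤ (1 / T : ℝ) * ∑ t, ℓ (c (x t)) (y t) + ε1 + ε2 := by
  intro ℓ hℓ c hc
  exact mul_sum_le_of_le_add_add (by positivity)
    (fun t => apply_le_of_sum_mul_le (hks ℓ hℓ (p t) (hp t) (c (x t))) (y t))
    (hMA ℓ hℓ c hc) (hCal ℓ hℓ)

/-- omniprediction decomposition, online setting. Labels `y_t ∈ ∂Δ^k` are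
encoded by their class index, `ℓ w i = ℓ(w, e_i)` is the loss, `d_ℓ(w) i = ℓ w i` the
discrete derivative, and `kstar ℓ` is the ex ante optimum map for `ℓ`. Multiaccuracy and
calibration imply omniprediction with error `ε₁ + ε₂`. -/
theorem stmt_13 {X Ω : Type*} (k T : ℕ) (hT : 0 < T)
    (L : Set (Ω → Fin k → ℝ)) (C : Set (X → Ω))
    (kstar : (Ω → Fin k → ℝ) → (Fin k → ℝ) → Ω)
    (x : Fin T → X) (y : Fin T → Fin k) (p : Fin T → Fin k → ℝ)
    (hp : ∀ t, p t ∈ stdSimplex ℝ (Fin k))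
    (hks : ∀ ℓ ∈ L, ∀ pp ∈ stdSimplex ℝ (Fin k), ∀ w : Ω,
      ∑ i, pp i * ℓ (kstar ℓ pp) i ≤ ∑ i, pp i * ℓ w i)
    (ε1 ε2 : ℝ)
    (hMA : ∀ ℓ ∈ L, ∀ c ∈ C,
      (1 / T : ℝ) * ∑ t, ∑ i, (p t i - if y t = i then 1 else 0) * ℓ (c (x t)) i ≤ ε1)
    (hCal : ∀ ℓ ∈ L,
      (1 / T : ℝ) * ∑ t, ∑ i,
        (p t i - if y t = i then 1 else 0) * (-(ℓ (kstar ℓ (p t)) i)) ≤ ε2) :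
    ∀ ℓ ∈ L, ∀ c ∈ C,
      (1 / T : ℝ) * ∑ t, ℓ (kstar ℓ (p t)) (y t)
        ≤ (1 / T : ℝ) * ∑ t, ℓ (c (x t)) (y t) + ε1 + ε2 :=
  stmt_13_general k T L C kstar x y p hp hks ε1 ε2 hMA hCal
end

section
/- (Counterexample to multiclass isotonic regression omniprediction, squared loss side.) Consider minimizing (1/2)‖p_1 − e_1‖_2² + (1/2)‖p_2 − e_2‖_2² over p_1, p_2 ∈ Δ^3 subject to [p_1]_1 ≤ [p_2]_1. The unique minimizer is p_1 = (3/7, 2/7, 2/7) and p_2 = (3/7, 4/7, 0). -/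
/-!
Expand the objective around the candidate `(p₁*, p₂*)`: being quadratic with identity Hessian,
it equals its value `3/7` there, plus the pairing of its gradient with the displacement, plus
`½‖p₁ - p₁*‖² + ½‖p₂ - p₂*‖²`. On the feasible set (both sums equal `1`) the gradient term
reduces to `6/7 ([p₂]₁ - [p₁]₁) + 3/7 [p₂]₃`, a combination of the constraints
`[p₁]₁ ≤ [p₂]₁` and `[p₂]₃ ≥ 0` with the KKT multipliers `6/7` and `3/7`; hence it is
nonnegative, and the objective exceeds `3/7` unless the squared displacement vanishes.
-/

open Finset

lemma sum_sq_sub_eq_of_center {ι : Type*} (s : Finset ι) (x y z : ι → ℝ) :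
    ∑ i ∈ s, (x i - y i) ^ 2 = ∑ i ∈ s, (z i - y i) ^ 2
      + 2 * ∑ i ∈ s, (z i - y i) * (x i - z i) + ∑ i ∈ s, (x i - z i) ^ 2 := by
  rw [mul_sum, ← sum_add_distrib, ← sum_add_distrib]
  exact sum_congr rfl fun i _ => by ring

lemma sum_sq_sub_eq_zero_iff {ι : Type*} [Fintype ι] {x y : ι → ℝ} :
    ∑ i, (x i - y i) ^ 2 = 0 ↔ x = y := by
  simp [sum_eq_zero_iff_of_nonneg fun i _ => sq_nonneg (x i - y i), sub_eq_zero, funext_iff]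

lemma mem_stdSimplex_fin_three_iff {a b c : ℝ} :
    ![a, b, c] ∈ stdSimplex ℝ (Fin 3) ↔ 0 ≤ a ∧ 0 ≤ b ∧ 0 ≤ c ∧ a + b + c = 1 := by
  simp [stdSimplex, Fin.forall_fin_succ, Fin.sum_univ_three, and_assoc]

/-- squared-loss side of the isotonic regression counterexample:
minimizing `½‖p₁ - e₁‖² + ½‖p₂ - e₂‖²` over `p₁, p₂ ∈ Δ³` with `[p₁]₁ ≤ [p₂]₁`
has the unique minimizer `p₁ = (3/7, 2/7, 2/7)`, `p₂ = (3/7, 4/7, 0)`. -/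
theorem stmt_14 :
    let p1s : Fin 3 → ℝ := ![3/7, 2/7, 2/7]
    let p2s : Fin 3 → ℝ := ![3/7, 4/7, 0]
    let obj : (Fin 3 → ℝ) → (Fin 3 → ℝ) → ℝ := fun p1 p2 =>
      (1/2) * ∑ i, (p1 i - if i = 0 then 1 else 0) ^ 2
        + (1/2) * ∑ i, (p2 i - if i = 1 then 1 else 0) ^ 2
    (p1s ∈ stdSimplex ℝ (Fin 3) ∧ p2s ∈ stdSimplex ℝ (Fin 3) ∧ p1s 0 ≤ p2s 0) ∧
    ∀ p1 ∈ stdSimplex ℝ (Fin 3), ∀ p2 ∈ stdSimplex ℝ (Fin 3), p1 0 ≤ p2 0 →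
      obj p1s p2s ≤ obj p1 p2 ∧ (obj p1s p2s = obj p1 p2 → p1 = p1s ∧ p2 = p2s) := by
  intro p1s p2s obj
  refine ⟨⟨?_, ?_, by norm_num [p1s, p2s]⟩, fun p1 hp1 p2 hp2 hle => ?_⟩
  · norm_num [p1s, mem_stdSimplex_fin_three_iff]
  · norm_num [p2s, mem_stdSimplex_fin_three_iff]
  have hexpand : obj p1 p2 = obj p1s p2s + (6/7 * (p2 0 - p1 0) + 3/7 * p2 2)
      + ((1/2) * ∑ i, (p1 i - p1s i) ^ 2 + (1/2) * ∑ i, (p2 i - p2s i) ^ 2) := by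
    have h1 := hp1.2
    have h2 := hp2.2
    simp only [obj]
    rw [sum_sq_sub_eq_of_center _ p1 _ p1s, sum_sq_sub_eq_of_center _ p2 _ p2s]
    simp only [Fin.sum_univ_three] at h1 h2 ⊢
    norm_num [p1s, p2s, Matrix.cons_val_two, Matrix.tail_cons, Fin.ext_iff]
    linear_combination (2/7) * h1 - (3/7) * h2
  have hgrad : 0 ≤ 6/7 * (p2 0 - p1 0) + 3/7 * p2 2 := by linarith [hp2.1 2]
  have hsq1 := sum_nonneg fun i (_ : i ∈ univ) => sq_nonneg (p1 i - p1s i)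
  have hsq2 := sum_nonneg fun i (_ : i ∈ univ) => sq_nonneg (p2 i - p2s i)
  refine ⟨by linarith, fun heq => ⟨?_, ?_⟩⟩
  · exact sum_sq_sub_eq_zero_iff.mp (by linarith)
  · exact sum_sq_sub_eq_zero_iff.mp (by linarith)
end

section
/- (Counterexample, log loss side.) For the same constrained problem with log loss, i.e., minimizing −log([p_1]_1) − log([p_2]_2) over p_1, p_2 ∈ Δ^3 with [p_1]_1 ≤ [p_2]_1, the point p_1 = (1/2, 1/4, 1/4), p_2 = (1/2, 1/2, 0) achieves strictly smaller objective than p_1 = (3/7, 2/7, 2/7), p_2 = (3/7, 4/7, 0). Hence the minimizer of the isotonic regression problem depends on the choice of proper loss. -/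
/-- log-loss side of the counterexample: the feasible point
`p₁ = (1/2, 1/4, 1/4)`, `p₂ = (1/2, 1/2, 0)` achieves strictly smaller log-loss objective
`-log([p₁]₁) - log([p₂]₂)` than the squared-loss minimizer
`p₁ = (3/7, 2/7, 2/7)`, `p₂ = (3/7, 4/7, 0)`. -/
theorem stmt_15 :
    let p1a : Fin 3 → ℝ := ![1/2, 1/4, 1/4]
    let p2a : Fin 3 → ℝ := ![1/2, 1/2, 0]
    let p1b : Fin 3 → ℝ := ![3/7, 2/7, 2/7]
    let p2b : Fin 3 → ℝ := ![3/7, 4/7, 0]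
    (p1a ∈ stdSimplex ℝ (Fin 3) ∧ p2a ∈ stdSimplex ℝ (Fin 3) ∧ p1a 0 ≤ p2a 0) ∧
    (-Real.log (p1a 0) - Real.log (p2a 1)) < (-Real.log (p1b 0) - Real.log (p2b 1)) := by
  refine ⟨⟨⟨?_, ?_⟩, ⟨?_, ?_⟩, ?_⟩, ?_⟩
  · intro i; fin_cases i <;> norm_num
  · simp [Fin.sum_univ_three]; norm_num
  · intro i; fin_cases i <;> norm_num
  · simp [Fin.sum_univ_three]; norm_num
  · norm_num
  · simp only [Matrix.cons_val_zero, Matrix.cons_val_one, Matrix.head_cons]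
    have h1 : Real.log (3/7 : ℝ) + Real.log (4/7 : ℝ) = Real.log (12/49 : ℝ) := by
      rw [← Real.log_mul (by norm_num) (by norm_num)]; norm_num
    have h2 : Real.log ((1:ℝ)/2) + Real.log ((1:ℝ)/2) = Real.log (1/4 : ℝ) := by
      rw [← Real.log_mul (by norm_num) (by norm_num)]; norm_num
    have h3 : Real.log (12/49 : ℝ) < Real.log (1/4 : ℝ) :=
      Real.log_lt_log (by norm_num) (by norm_num)
    linarith
end

section
/- (Simultaneous approachability guarantee.) Suppose for each i ∈ [m] the sequence (u_t^{(i)}, v_t^{(i)})_{t∈[T]} with u_t^{(i)} ∈ U^{(i)}, v_t^{(i)} ∈ H^{(i)} satisfies the learner regret bound sup_{u∈U^{(i)}} Σ_t ⟨v_t^{(i)}, u − u_t^{(i)}⟩ ≤ reg^{(i)}(T), and that the plays satisfy the mixture bound Σ_i [w_t]_i ⟨u_t^{(i)}, v_t^{(i)}⟩ ≤ ρ + ε for all t, where w_t are MWU iterates against the payoffs g_t with [g_t]_i = ⟨u_t^{(i)}, v_t^{(i)}⟩, |[g_t]_i| ≤ L. Then for every i ∈ [m], sup_{u∈U^{(i)}}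 ⟨u, (1/T)Σ_t v_t^{(i)}⟩ ≤ ρ + ε + (reg^{(i)}(T) + L√(2T log m))/T. -/
open scoped RealInnerProductSpace

/-- simultaneous approachability guarantee: combining per-instance learner
regret bounds, the mixture (MLOO) bound at each step, and the MWU regret bound yields
`sup_{u ∈ U⁽ⁱ⁾} ⟨u, (1/T)∑_t v_t⁽ⁱ⁾⟩ ≤ ρ + ε + (reg⁽ⁱ⁾(T) + L√(2T log m))/T` for each `i`. -/
theorem stmt_17 (m T : ℕ) (hm : 0 < m) (hT : 0 < T) (ρ ε L : ℝ)
    (H : Fin m → Type*) [∀ i, NormedAddCommGroup (H i)] [∀ i, InnerProductSpace ℝ (H i)]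
    (U : ∀ i, Set (H i)) (u v : ∀ i, Fin T → H i)
    (hu : ∀ i t, u i t ∈ U i)
    (reg : Fin m → ℝ)
    (hreg : ∀ i, ∀ uu ∈ U i, ∑ t, ⟪v i t, uu - u i t⟫ ≤ reg i)
    (w : Fin T → Fin m → ℝ)
    (hgL : ∀ t i, |⟪u i t, v i t⟫| ≤ L)
    (hmwu : ∀ w' : Fin m → ℝ, (∀ i, 0 ≤ w' i) → (∑ i, w' i = 1) →
      ∑ t, ∑ i, (w' i - w t i) * ⟪u i t, v i t⟫ ≤ L * Real.sqrt (2 * T * Real.log m))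
    (hmix : ∀ t, ∑ i, w t i * ⟪u i t, v i t⟫ ≤ ρ + ε) :
    ∀ i, ∀ uu ∈ U i,
      ⟪uu, (1 / T : ℝ) • ∑ t, v i t⟫
        ≤ ρ + ε + (reg i + L * Real.sqrt (2 * T * Real.log m)) / T := by
  intro i uu huu
  have hTpos : (0 : ℝ) < T := by exact_mod_cast hT
  -- step 1: MWU bound with dirac at i
  have hdirac := hmwu (fun j => if j = i then 1 else 0)
    (fun j => by positivity) (by simp)
  have hdirac' : ∑ t, (⟪u i t, v i t⟫ - ∑ j, w t j * ⟪u j t, v j t⟫)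
      ≤ L * Real.sqrt (2 * T * Real.log m) := by
    refine le_trans (le_of_eq ?_) hdirac
    refine Finset.sum_congr rfl fun t _ => ?_
    symm
    simp only [sub_mul, Finset.sum_sub_distrib]
    congr 1
    rw [Finset.sum_eq_single i] <;> simp +contextual
  have hsum1 : ∑ t, ⟪u i t, v i t⟫ ≤ T * (ρ + ε) + L * Real.sqrt (2 * T * Real.log m) := by
    have h2 : ∑ t : Fin T, ∑ j, w t j * ⟪u j t, v j t⟫ ≤ T * (ρ + ε) := by
      calc ∑ t : Fin T, ∑ j, w t j * ⟪u j t, v j t⟫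
          ≤ ∑ t : Fin T, (ρ + ε) := Finset.sum_le_sum fun t _ => hmix t
        _ = T * (ρ + ε) := by simp [mul_comm]; ring
    have := Finset.sum_sub_distrib (s := Finset.univ)
      (f := fun t => ⟪u i t, v i t⟫) (g := fun t => ∑ j, w t j * ⟪u j t, v j t⟫)
    rw [this] at hdirac'
    linarith
  -- step 2: regret
  have hreg' := hreg i uu huu
  have hsum2 : ∑ t, ⟪v i t, uu⟫ ≤ ∑ t, ⟪u i t, v i t⟫ + reg i := by
    have : ∑ t, ⟪v i t, uu⟫ = ∑ t, ⟪v i t, u i t⟫ + ∑ t, ⟪v i t, uu - u i t⟫ := by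
      rw [← Finset.sum_add_distrib]
      exact Finset.sum_congr rfl fun t _ => by rw [← inner_add_right, add_sub_cancel]
    rw [this]
    have : ∑ t, ⟪v i t, u i t⟫ = ∑ t, ⟪u i t, v i t⟫ :=
      Finset.sum_congr rfl fun t _ => real_inner_comm _ _
    rw [this]; linarith
  -- combine
  have hfinal : ⟪uu, ∑ t, v i t⟫
      ≤ T * (ρ + ε) + L * Real.sqrt (2 * T * Real.log m) + reg i := by
    rw [inner_sum]
    calc ∑ t, ⟪uu, v i t⟫ = ∑ t, ⟪v i t, uu⟫ :=
          Finset.sum_congr rfl fun t _ => real_inner_comm _ _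
      _ ≤ _ := by linarith
  rw [inner_smul_right, ← sub_nonneg]
  have : ρ + ε + (reg i + L * Real.sqrt (2 * T * Real.log m)) / T
      - 1 / T * ⟪uu, ∑ t, v i t⟫
      = (T * (ρ + ε) + L * Real.sqrt (2 * T * Real.log m) + reg i - ⟪uu, ∑ t, v i t⟫) / T := by
    field_simp; ring
  rw [this]
  exact div_nonneg (by linarith) hTpos.le
end
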